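/- Suppose β̂ ∉ {z, −z} and D := γ_{β,β̂} − γ_{β,z} γ_{β̂,z} > 0. Then ρ* = (γ_{β,z} − γ_{β,β̂} γ_{β̂,z}) / D satisfies: (a) β̂(ρ*) ∈ S_β, i.e., γ_{β,z} − γ_{β̂(ρ*),z} γ_{β̂(ρ*),β} = 0; and (b) ρ* maximizes the function ρ ↦ γ_{β, β̂(ρ)} over ρ ∈ ℝ. -/

import Mathlib

/-!
With `a = γ_{β,β̂}`, `c = γ_{β,z}`, `d = γ_{β̂,z}` one has `‖β̂ + ρ z‖² = 1 + 2dρ + ρ²`, so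
`f(ρ) = γ_{β,β̂(ρ)} = (a + ρc)/√(1 + 2dρ + ρ²)`. A Lagrange-type identity gives
`(1 - d²) f(ρ)² = a² + c² - 2acd - ((a - cd)ρ - (c - ad))² / (1 + 2dρ + ρ²)`,
so `f²` is maximal exactly where `(a - cd)ρ = c - ad`, i.e. at `ρ*`; there `f(ρ*) ≥ 0`, so `ρ*`
maximizes `f` itself. The same linear expression `(c - ad) - (a - cd)ρ` is the numerator of
`γ_{β,z} - γ_{β̂(ρ),z} γ_{β̂(ρ),β}`, which therefore also vanishes at `ρ*`.
-/

open Filter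
open scoped Topology

/-- Euclidean inner product on `Fin N → ℝ`. -/
noncomputable def dotp {N : ℕ} (x y : Fin N → ℝ) : ℝ := ∑ i, x i * y i

/-- The point `β̂(ρ) = (β̂ + ρ z)/‖β̂ + ρ z‖₂` on the geodesic through `β̂` and `z`. -/
noncomputable def geo {N : ℕ} (b z : Fin N → ℝ) (ρ : ℝ) : Fin N → ℝ :=
  fun i => (b i + ρ * z i) / Real.sqrt (∑ j, (b j + ρ * z j) ^ 2)

open Matrix

section DotProduct

variable {n R : Type*} [Fintype n]

lemma dotProduct_self_pos [Ring R] [LinearOrder R] [IsStrictOrderedRing R] {v : n → R}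
    (hv : v ≠ 0) : 0 < v ⬝ᵥ v :=
  lt_of_le_of_ne (Finset.sum_nonneg fun i _ => mul_self_nonneg (v i))
    (Ne.symm (dotProduct_self_eq_zero.not.mpr hv))

lemma sq_dotProduct_lt_one_of_ne_of_ne_neg [CommRing R] [LinearOrder R] [IsStrictOrderedRing R]
    {b z : n → R} (hb : b ⬝ᵥ b = 1) (hz : z ⬝ᵥ z = 1)
    (hbz : b ≠ z) (hbz' : b ≠ -z) : (b ⬝ᵥ z) ^ 2 < 1 := by
  have hsub := dotProduct_self_pos (sub_ne_zero.mpr hbz)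
  have hadd := dotProduct_self_pos (fun h => hbz' (eq_neg_of_add_eq_zero_left h))
  simp only [sub_dotProduct, dotProduct_sub, add_dotProduct, dotProduct_add,
    dotProduct_comm z b, hb, hz] at hsub hadd
  nlinarith

end DotProduct

section Geodesic

variable {N : ℕ}

lemma dotp_eq_dotProduct (x y : Fin N → ℝ) : dotp x y = x ⬝ᵥ y := rfl

lemma dotp_comm (x y : Fin N → ℝ) : dotp x y = dotp y x := dotProduct_comm x y

lemma sum_sq_add_mul (b z : Fin N → ℝ) (ρ : ℝ) :
    ∑ j, (b j + ρ * z j) ^ 2 = dotp b b + 2 * dotp b z * ρ + ρ ^ 2 * dotp z z := by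
  simp only [dotp, Finset.mul_sum, Finset.sum_mul, ← Finset.sum_add_distrib]
  exact Finset.sum_congr rfl fun j _ => by ring

lemma dotp_geo (x b z : Fin N → ℝ) (ρ : ℝ) :
    dotp x (geo b z ρ) = (dotp x b + ρ * dotp x z) / √(∑ j, (b j + ρ * z j) ^ 2) := by
  simp only [dotp, geo, mul_div_assoc', ← Finset.sum_div, Finset.mul_sum,
    ← Finset.sum_add_distrib, mul_add, mul_left_comm]

lemma dotp_geo_of_unit {b z : Fin N → ℝ} (hb : dotp b b = 1) (hz : dotp z z = 1)
    (x : Fin N → ℝ) (ρ : ℝ) :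
    dotp x (geo b z ρ) = (dotp x b + ρ * dotp x z) / √(1 + 2 * dotp b z * ρ + ρ ^ 2) := by
  rw [dotp_geo, sum_sq_add_mul, hb, hz, mul_one]

end Geodesic

section Scalar

variable {a c d : ℝ}

lemma one_add_two_mul_add_sq_pos (hd : d ^ 2 < 1) (ρ : ℝ) : 0 < 1 + 2 * d * ρ + ρ ^ 2 := by
  nlinarith [sq_nonneg (ρ + d)]

lemma one_sub_sq_mul_sq_div_sqrt (hd : d ^ 2 < 1) (ρ : ℝ) :
    (1 - d ^ 2) * ((a + ρ * c) / √(1 + 2 * d * ρ + ρ ^ 2)) ^ 2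
      = a ^ 2 + c ^ 2 - 2 * a * c * d
        - ((a - c * d) * ρ - (c - a * d)) ^ 2 / (1 + 2 * d * ρ + ρ ^ 2) := by
  have hq := one_add_two_mul_add_sq_pos hd ρ
  rw [div_pow, Real.sq_sqrt hq.le, mul_div_assoc', eq_sub_iff_add_eq, ← add_div,
    div_eq_iff hq.ne']
  ring

lemma sub_div_sqrt_mul_div_sqrt (hd : d ^ 2 < 1) (ρ : ℝ) :
    c - (d + ρ) / √(1 + 2 * d * ρ + ρ ^ 2) * ((a + ρ * c) / √(1 + 2 * d * ρ + ρ ^ 2))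
      = ((c - a * d) - (a - c * d) * ρ) / (1 + 2 * d * ρ + ρ ^ 2) := by
  have hq := one_add_two_mul_add_sq_pos hd ρ
  rw [div_mul_div_comm, Real.mul_self_sqrt hq.le, eq_div_iff hq.ne', sub_mul,
    div_mul_cancel₀ _ hq.ne']
  ring

lemma div_sqrt_le_div_sqrt_of_mul_eq (hd : d ^ 2 < 1) (hD : 0 < a - c * d) {ρstar : ℝ}
    (hρ : (a - c * d) * ρstar = c - a * d) (ρ : ℝ) :
    (a + ρ * c) / √(1 + 2 * d * ρ + ρ ^ 2)
      ≤ (a + ρstar * c) / √(1 + 2 * d * ρstar + ρstar ^ 2) := by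
  have hnum : a + ρstar * c = ((a - c * d) ^ 2 + c ^ 2 * (1 - d ^ 2)) / (a - c * d) := by
    rw [eq_div_iff hD.ne']
    linear_combination c * hρ
  have hstar_nonneg : 0 ≤ (a + ρstar * c) / √(1 + 2 * d * ρstar + ρstar ^ 2) := by
    rw [hnum]
    have : 0 ≤ 1 - d ^ 2 := by linarith
    positivity
  have hsq : (1 - d ^ 2) * ((a + ρ * c) / √(1 + 2 * d * ρ + ρ ^ 2)) ^ 2
      ≤ (1 - d ^ 2) * ((a + ρstar * c) / √(1 + 2 * d * ρstar + ρstar ^ 2)) ^ 2 := by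
    rw [one_sub_sq_mul_sq_div_sqrt hd, one_sub_sq_mul_sq_div_sqrt hd, hρ, sub_self,
      zero_pow two_ne_zero, zero_div, sub_zero, sub_le_self_iff]
    exact div_nonneg (sq_nonneg _) (one_add_two_mul_add_sq_pos hd ρ).le
  exact (le_abs_self _).trans
    (abs_le_of_sq_le_sq (le_of_mul_le_mul_left hsq (by linarith)) hstar_nonneg)

end Scalar

theorem dispersion_bias_stmt6_general
    (N : ℕ) (β bhat z : Fin N → ℝ)
    (hb : dotp bhat bhat = 1) (hz : dotp z z = 1)
    (hbz : bhat ≠ z) (hbz' : bhat ≠ -z)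
    (hD : 0 < dotp β bhat - dotp β z * dotp bhat z)
    (ρstar : ℝ)
    (hρ : ρstar = (dotp β z - dotp β bhat * dotp bhat z)
        / (dotp β bhat - dotp β z * dotp bhat z)) :
    (dotp β z - dotp (geo bhat z ρstar) z * dotp (geo bhat z ρstar) β = 0) ∧
    (∀ ρ : ℝ, dotp β (geo bhat z ρ) ≤ dotp β (geo bhat z ρstar)) := by
  have hd : dotp bhat z ^ 2 < 1 := by
    simp only [dotp_eq_dotProduct] at hb hz ⊢
    exact sq_dotProduct_lt_one_of_ne_of_ne_neg hb hz hbz hbz'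
  have hρ' : (dotp β bhat - dotp β z * dotp bhat z) * ρstar
      = dotp β z - dotp β bhat * dotp bhat z := by
    rw [hρ, mul_div_cancel₀ _ hD.ne']
  refine ⟨?_, fun ρ => ?_⟩
  · rw [dotp_comm (geo bhat z ρstar) z, dotp_comm (geo bhat z ρstar) β,
      dotp_geo_of_unit hb hz, dotp_geo_of_unit hb hz, dotp_comm z bhat, hz, mul_one, sub_div_sqrt_mul_div_sqrt hd, hρ', sub_self, zero_div]
  · simp only [dotp_geo_of_unit hb hz]
    exact div_sqrt_le_div_sqrt_of_mul_eq hd hD hρ' ρ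

/-- if `β̂ ∉ {z, −z}` and `D = γ_{β,β̂} − γ_{β,z} γ_{β̂,z} > 0`, then
`ρ* = (γ_{β,z} − γ_{β,β̂} γ_{β̂,z})/D` satisfies (a) `β̂(ρ*) ∈ S_β`, i.e.
`γ_{β,z} − γ_{β̂(ρ*),z} γ_{β̂(ρ*),β} = 0`, and (b) `ρ*` maximizes `ρ ↦ γ_{β,β̂(ρ)}`. -/
theorem dispersion_bias_stmt6
    (N : ℕ) (hN : 2 ≤ N) (β bhat z : Fin N → ℝ)
    (hβ : dotp β β = 1) (hb : dotp bhat bhat = 1) (hz : dotp z z = 1)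
    (hbz : bhat ≠ z) (hbz' : bhat ≠ -z)
    (hD : 0 < dotp β bhat - dotp β z * dotp bhat z)
    (ρstar : ℝ)
    (hρ : ρstar = (dotp β z - dotp β bhat * dotp bhat z)
        / (dotp β bhat - dotp β z * dotp bhat z)) :
    (dotp β z - dotp (geo bhat z ρstar) z * dotp (geo bhat z ρstar) β = 0) ∧
    (∀ ρ : ℝ, dotp β (geo bhat z ρ) ≤ dotp β (geo bhat z ρstar)) :=
  dispersion_bias_stmt6_general N β bhat z hb hz hbz hbz' hD ρstar hρ
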